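/- With the truncated Gaussian kernel w_γ and piecewise linear signal μ as above, set a_j = (c_{j+1} − c_j) + (k_{j+1} − k_j)v_j. For t ∈ (v_j − cγ, v_j + cγ), the first derivative of the smoothed signal equals μ'_γ(t) = (a_j/γ)φ((v_j − t)/γ) + (k_j − k_{j+1})Φ((v_j − t)/γ) + (k_j + k_{j+1})Φ(c) − k_j. -/

import Mathlib

open MeasureTheory Set

/-- Standard normal pdf. -/
noncomputable def phi (x : ℝ) : ℝ := (Real.sqrt (2 * Real.pi))⁻¹ * Real.exp (-x ^ 2 / 2)

/-- Standard normal cdf. -/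
noncomputable def Phi (x : ℝ) : ℝ := ∫ u in Set.Iic x, phi u

/-- Closed-form smoothed signal on the transition interval (Lemma 1). -/
noncomputable def muSmooth (c γ v c₁ k₁ c₂ k₂ : ℝ) (t : ℝ) : ℝ :=
  (c₁ + k₁ * t - (c₂ + k₂ * t)) * Phi ((v - t) / γ)
    + (c₁ + k₁ * t + (c₂ + k₂ * t)) * Phi c
    - (c₁ + k₁ * t)
    + (k₁ - k₂) * γ * phi c
    + (k₂ - k₁) * γ * phi ((v - t) / γ)

lemma phi_cont : Continuous phi := by
  unfold phi; continuity

lemma phi_integrable : Integrable phi := by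
  unfold phi
  apply Integrable.const_mul
  have : (fun x : ℝ => Real.exp (-x ^ 2 / 2)) = fun x : ℝ => Real.exp (-(1/2) * x ^ 2) := by
    ext x; ring_nf
  rw [this]
  exact integrable_exp_neg_mul_sq (by norm_num)

lemma hasDerivAt_phi (x : ℝ) : HasDerivAt phi (-x * phi x) x := by
  have h1 : HasDerivAt (fun x : ℝ => -x ^ 2 / 2) (-x) x := by
    have := (hasDerivAt_pow 2 x).neg.div_const 2
    refine this.congr_deriv ?_; push_cast; ring
  have := (h1.exp).const_mul ((Real.sqrt (2 * Real.pi))⁻¹)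
  refine this.congr_deriv ?_
  unfold phi; ring

lemma hasDerivAt_Phi (x : ℝ) : HasDerivAt Phi (phi x) x := by
  have key : ∀ y : ℝ, Phi y = (∫ u in (0:ℝ)..y, phi u) + Phi 0 := by
    intro y
    have := intervalIntegral.integral_Iic_sub_Iic (phi_integrable.integrableOn) (phi_integrable.integrableOn) (a := 0) (b := y)
    unfold Phi
    linarith [this]
  have h : HasDerivAt (fun y => (∫ u in (0:ℝ)..y, phi u) + Phi 0) (phi x) x := by
    apply HasDerivAt.add_const
    exact intervalIntegral.integral_hasDerivAt_right phi_integrable.intervalIntegrable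
      phi_integrable.aestronglyMeasurable.stronglyMeasurableAtFilter
      (phi_cont.continuousAt)
  exact (funext key) ▸ h

/-- The first derivative of the smoothed signal on the transition interval equals
`(a_j/γ)φ((v−t)/γ) + (k_j − k_{j+1})Φ((v−t)/γ) + (k_j + k_{j+1})Φ(c) − k_j`,
where `a_j = (c_{j+1} − c_j) + (k_{j+1} − k_j)v_j`. -/
theorem stmt2 (c γ : ℝ) (hc : 0 < c) (hγ : 0 < γ)
    (c₁ k₁ c₂ k₂ v : ℝ)
    (t : ℝ) (ht : t ∈ Set.Ioo (v - c * γ) (v + c * γ)) :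
    HasDerivAt (muSmooth c γ v c₁ k₁ c₂ k₂)
      (((c₂ - c₁) + (k₂ - k₁) * v) / γ * phi ((v - t) / γ)
        + (k₁ - k₂) * Phi ((v - t) / γ) + (k₁ + k₂) * Phi c - k₁) t := by
  have hu : HasDerivAt (fun t : ℝ => (v - t) / γ) (-1 / γ) t := by
    have := ((hasDerivAt_id t).const_sub v).div_const γ
    simpa using this
  have hP : HasDerivAt (fun t : ℝ => Phi ((v - t) / γ)) (phi ((v - t) / γ) * (-1 / γ)) t :=
    (hasDerivAt_Phi _).comp t hu
  have hp : HasDerivAt (fun t : ℝ => phi ((v - t) / γ))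
      ((-((v - t) / γ) * phi ((v - t) / γ)) * (-1 / γ)) t :=
    (hasDerivAt_phi _).comp t hu
  have h1 : HasDerivAt (fun t : ℝ => c₁ + k₁ * t - (c₂ + k₂ * t)) (k₁ - k₂) t := by
    have := (((hasDerivAt_id t).const_mul k₁).const_add c₁).sub
      (((hasDerivAt_id t).const_mul k₂).const_add c₂)
    exact this.congr_deriv (by simp)
  have h2 : HasDerivAt (fun t : ℝ => c₁ + k₁ * t + (c₂ + k₂ * t)) (k₁ + k₂) t := by
    have := (((hasDerivAt_id t).const_mul k₁).const_add c₁).add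
      (((hasDerivAt_id t).const_mul k₂).const_add c₂)
    exact this.congr_deriv (by simp)
  have h3 : HasDerivAt (fun t : ℝ => c₁ + k₁ * t) k₁ t := by
    have := ((hasDerivAt_id t).const_mul k₁).const_add c₁
    simpa using this
  have H := ((((h1.mul hP).add (h2.mul (hasDerivAt_const t (Phi c)))).sub h3).add_const
      ((k₁ - k₂) * γ * phi c)).add (hp.const_mul ((k₂ - k₁) * γ))
  refine H.congr_deriv ?_
  field_simp
  ring
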